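/- arXiv:2509.07499 — 3 statements merged into one kernel-verified Lean document; each statement's English description precedes it below -/
import Mathlib

section
/- Let k ≥ 1 be an integer and u₁ < u₂ < … < u_k real numbers. The function ρ is 𝔅-Lipschitz with respect to the supremum norm: for all f¹, f² ∈ ℝ^k, |ρ(f¹) − ρ(f²)| ≤ (u_k − u₁) · max_{1≤i≤k} |f¹_i − f²_i|. -/
/-!
Along the segment `t ↦ f₂ + t (f₁ - f₂)` the derivative of `ρ` is the softmax average of
`(f₁ - f₂)ᵢ (uᵢ - ρ)`. Since `ρ` is itself a softmax average of the `u j`, `|uᵢ - ρ| ≤ 𝔅`, so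
the derivative is bounded by `𝔅 ‖f₁ - f₂‖∞`; the mean value theorem finishes.
-/

open Finset Real

namespace Softmax

variable {ι : Type*} [Fintype ι]

noncomputable def softmax (f : ι → ℝ) (i : ι) : ℝ := exp (f i) / ∑ j, exp (f j)

noncomputable def softmaxMean (u f : ι → ℝ) : ℝ := ∑ i, u i * softmax f i

lemma sum_exp_pos [Nonempty ι] (f : ι → ℝ) : 0 < ∑ j, exp (f j) :=
  sum_pos (fun _ _ => exp_pos _) univ_nonempty

lemma softmax_pos [Nonempty ι] (f : ι → ℝ) (i : ι) : 0 < softmax f i :=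
  div_pos (exp_pos _) (sum_exp_pos f)

lemma sum_softmax [Nonempty ι] (f : ι → ℝ) : ∑ i, softmax f i = 1 := by
  simp only [softmax, ← sum_div, div_self (sum_exp_pos f).ne']

lemma softmaxMean_eq_div (u f : ι → ℝ) :
    softmaxMean u f = (∑ i, u i * exp (f i)) / ∑ j, exp (f j) := by
  simp only [softmaxMean, softmax, sum_div, mul_div_assoc]

lemma abs_sum_softmax_mul_le [Nonempty ι] (f : ι → ℝ) {w : ι → ℝ} {C : ℝ}
    (hw : ∀ i, |w i| ≤ C) : |∑ i, softmax f i * w i| ≤ C :=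
  calc |∑ i, softmax f i * w i| ≤ ∑ i, softmax f i * |w i| := by
        refine (abs_sum_le_sum_abs _ _).trans_eq (sum_congr rfl fun i _ => ?_)
        rw [abs_mul, abs_of_pos (softmax_pos f i)]
    _ ≤ ∑ i, softmax f i * C :=
        sum_le_sum fun i _ => mul_le_mul_of_nonneg_left (hw i) (softmax_pos f i).le
    _ = C := by rw [← sum_mul, sum_softmax, one_mul]

lemma abs_sub_softmaxMean_le [Nonempty ι] {u : ι → ℝ} {B : ℝ} (hB : ∀ i j, |u i - u j| ≤ B)
    (f : ι → ℝ) (i : ι) : |u i - softmaxMean u f| ≤ B := by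
  have h : u i - softmaxMean u f = ∑ j, softmax f j * (u i - u j) := by
    simp only [softmaxMean, mul_sub, sum_sub_distrib, ← sum_mul, sum_softmax, one_mul]
    simp only [mul_comm]
  exact h ▸ abs_sum_softmax_mul_le f (hB i)

lemma hasDerivAt_softmaxMean_add_smul [Nonempty ι] (u f v : ι → ℝ) (t : ℝ) :
    HasDerivAt (fun s => softmaxMean u (f + s • v))
      (∑ i, softmax (f + t • v) i * v i * (u i - softmaxMean u (f + t • v))) t := by
  have hexp : ∀ i, HasDerivAt (fun s => exp (f i + s * v i)) (exp (f i + t * v i) * v i) t :=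
    fun i => ((hasDerivAt_mul_const (v i)).const_add (f i)).exp
  have hquot := (HasDerivAt.fun_sum (u := univ) fun i _ => (hexp i).const_mul (u i)).fun_div
    (HasDerivAt.fun_sum (u := univ) fun i _ => hexp i) (sum_exp_pos (f + t • v)).ne'
  simp only [softmaxMean_eq_div, Pi.add_apply, Pi.smul_apply, smul_eq_mul] at hquot ⊢
  refine hquot.congr_deriv ?_
  set D := ∑ j, exp (f j + t * v j)
  set N := ∑ j, u j * exp (f j + t * v j)
  have hD : D ≠ 0 := (sum_exp_pos (f + t • v)).ne'
  have hterm : ∀ i, exp (f i + t * v i) / D * v i * (u i - N / D)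
      = u i * (exp (f i + t * v i) * v i) / D - N / D ^ 2 * (exp (f i + t * v i) * v i) := by
    intro i; field_simp
  simp only [softmax, Pi.add_apply, Pi.smul_apply, smul_eq_mul]
  rw [sum_congr rfl fun i _ => hterm i, sum_sub_distrib, ← sum_div, ← mul_sum]
  field_simp

lemma abs_softmaxMean_sub_le [Nonempty ι] {u : ι → ℝ} {B : ℝ} (hB : ∀ i j, |u i - u j| ≤ B)
    (f g : ι → ℝ) : |softmaxMean u f - softmaxMean u g| ≤ B * ‖f - g‖ := by
  have hderiv_le : ∀ t : ℝ, |∑ i, softmax (g + t • (f - g)) i * (f - g) i *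
      (u i - softmaxMean u (g + t • (f - g)))| ≤ B * ‖f - g‖ := fun t => by
    simp only [mul_assoc]
    refine abs_sum_softmax_mul_le _ fun i => ?_
    rw [abs_mul, mul_comm B]
    exact mul_le_mul (norm_le_pi_norm (f - g) i) (abs_sub_softmaxMean_le hB _ i) (abs_nonneg _)
      (norm_nonneg _)
  simpa using norm_image_sub_le_of_norm_deriv_le_segment_01'
    (fun t _ => (hasDerivAt_softmaxMean_add_smul u g (f - g) t).hasDerivWithinAt)
    (fun t _ => hderiv_le t)

end Softmax

open Softmax in
/-- Fix an integer `k ≥ 1` and real numbers `u 0 < u 1 < … < u (k-1)`;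
set `𝔅 = u (k-1) - u 0`.  With `softmax f i = exp (f i) / ∑ j exp (f j)` and
`ρ f = ∑ i, u i * softmax f i`, the function `ρ` is `𝔅`-Lipschitz with respect to the
supremum norm: for all `f¹, f² ∈ ℝ^k`,
`|ρ f¹ - ρ f²| ≤ (u (k-1) - u 0) * max_i |f¹ i - f² i|`. -/
theorem stmt_1 (k : ℕ) (hk : 0 < k) (u : Fin k → ℝ) (hu : StrictMono u)
    (softmax : (Fin k → ℝ) → Fin k → ℝ)
    (hsm : ∀ f i, softmax f i = Real.exp (f i) / ∑ j, Real.exp (f j))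
    (ρ : (Fin k → ℝ) → ℝ)
    (hρ : ∀ f, ρ f = ∑ i, u i * softmax f i)
    (f₁ f₂ : Fin k → ℝ) :
    |ρ f₁ - ρ f₂| ≤ (u ⟨k - 1, by omega⟩ - u ⟨0, hk⟩) * ⨆ i : Fin k, |f₁ i - f₂ i| := by
  have : Nonempty (Fin k) := ⟨⟨0, hk⟩⟩
  have hρ_eq : ρ = softmaxMean u := funext fun f => by
    simp only [hρ, hsm, softmaxMean, Softmax.softmax]
  have hmem : ∀ i, u i ∈ Set.Icc (u ⟨0, hk⟩) (u ⟨k - 1, by omega⟩) := fun i =>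
    ⟨hu.monotone (Nat.zero_le _), hu.monotone (show (i : ℕ) ≤ k - 1 by omega)⟩
  have hspread : ∀ i j, |u i - u j| ≤ u ⟨k - 1, by omega⟩ - u ⟨0, hk⟩ := fun i j =>
    Real.dist_le_of_mem_Icc (hmem i) (hmem j)
  have hnorm : ‖f₁ - f₂‖ ≤ ⨆ i, |f₁ i - f₂ i| :=
    (pi_norm_le_iff_of_nonneg (Real.iSup_nonneg fun _ => abs_nonneg _)).2 fun i =>
      (Real.norm_eq_abs _).trans_le
        (le_ciSup (f := fun i => |f₁ i - f₂ i|) (Set.finite_range _).bddAbove i)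
  calc |ρ f₁ - ρ f₂| ≤ (u ⟨k - 1, by omega⟩ - u ⟨0, hk⟩) * ‖f₁ - f₂‖ :=
        hρ_eq ▸ abs_softmaxMean_sub_le hspread f₁ f₂
    _ ≤ _ := mul_le_mul_of_nonneg_left hnorm ((abs_nonneg _).trans (hspread ⟨0, hk⟩ ⟨0, hk⟩))
end

section
/- (L∞ covering number of linear classes with (2,1)-norm constraints.) Let N, U, d, m be positive integers and a, b, ε > 0. Let X ∈ ℝ^{N×U×d} be a tensor with ‖X_{i,u,·}‖₂ ≤ b for all i ≤ N and u ≤ U, and fix M ∈ ℝ^{d×m}. Then log₂ 𝒩( { XA : A ∈ ℝ^{d×m}, ‖A − M‖_{2,1} ≤ a }, ε, ‖·‖_* ) ≤ (64 a² b² / ε²) · log₂( (8ab/ε + 7) · m N U ). -/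
/-!
Write `w_c` for the columns of `A - M` and `x_p` for the vectors `X_{i,u,·}`, so that the error
of an approximant `v` at `p` is the vector `(⟪x_p, w_c - v_c⟫)_c`. Each column is approximated by
a perceptron-style greedy procedure: while some `x_p` has `|⟪x_p, w_c - v_c⟫| > τ_c`, add
`±η_c x_p` to `v_c`, which lowers `‖w_c - v_c‖²` by at least `η_c τ_c`. With
`τ_c = ε √(‖w_c‖ / a)` the squared errors sum to at most `ε²`, and with `η_c ≈ τ_c / b²` column `c`
needs at most `2ab²‖w_c‖/ε²` steps, hence `2(ab/ε)²` steps in total. Rounding the step sizes to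
multiples of `ε²/(2ab³)` leaves `⌈2ab/ε⌉ + 1` of them, so every approximant is a sum of
`⌊2(ab/ε)²⌋` atoms `(p, c, step, sign)` padded with zeros; there are at most
`(3mNU(⌈2ab/ε⌉ + 1) + 1)^⌊2(ab/ε)²⌋` such sums.
-/

open scoped BigOperators

noncomputable def eNorm {q : ℕ} (v : Fin q → ℝ) : ℝ := Real.sqrt (∑ i, v i ^ 2)

open scoped RealInnerProductSpace

section

variable {E : Type*} [NormedAddCommGroup E] [InnerProductSpace ℝ E] {ι : Type*}

noncomputable def signedSum (x : ι → E) (l : List (ι × SignType)) : E :=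
  (l.map fun e => (e.2 : ℝ) • x e.1).sum

@[simp] lemma signedSum_nil (x : ι → E) : signedSum x [] = 0 := rfl

@[simp] lemma signedSum_cons (x : ι → E) (e : ι × SignType) (l : List (ι × SignType)) :
    signedSum x (e :: l) = (e.2 : ℝ) • x e.1 + signedSum x l := rfl

lemma norm_sub_sign_smul_sq_le {v w : E} {b η τ : ℝ} (hη : 0 ≤ η) (hv : ‖v‖ ≤ b)
    (hητ : η * b ^ 2 ≤ τ) (hτ : τ ≤ |⟪v, w⟫|) :
    ‖w - (η * SignType.sign ⟪v, w⟫) • v‖ ^ 2 ≤ ‖w‖ ^ 2 - η * τ := by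
  have hinner : ⟪w, (η * SignType.sign ⟪v, w⟫) • v⟫ = η * |⟪v, w⟫| := by
    rw [real_inner_smul_right, real_inner_comm, mul_assoc, sign_mul_self]
  have hsign : ‖(SignType.sign ⟪v, w⟫ : ℝ)‖ ≤ 1 := by
    rcases SignType.sign ⟪v, w⟫ with _ | _ | _ <;> simp
  have hnorm : ‖(η * SignType.sign ⟪v, w⟫) • v‖ ≤ η * b := by
    rw [norm_smul, norm_mul, Real.norm_of_nonneg hη]
    simpa using
      mul_le_mul (mul_le_mul_of_nonneg_left hsign hη) hv (norm_nonneg v) (by simpa using hη)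
  rw [norm_sub_sq_real, hinner]
  nlinarith [pow_le_pow_left₀ (norm_nonneg _) hnorm 2]

theorem exists_signedSum_abs_inner_sub_le (x : ι → E) {b η τ : ℝ} (hη : 0 < η) (hτ : 0 < τ)
    (hητ : η * b ^ 2 ≤ τ) (hx : ∀ p, ‖x p‖ ≤ b) (w : E) :
    ∃ l : List (ι × SignType), l.length * (η * τ) ≤ ‖w‖ ^ 2 ∧
      ∀ p, |⟪x p, w - η • signedSum x l⟫| ≤ τ := by
  obtain ⟨n, hn⟩ := exists_nat_gt (‖w‖ ^ 2 / (η * τ))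
  rw [div_lt_iff₀ (by positivity)] at hn
  induction n generalizing w with
  | zero => simp at hn; nlinarith [sq_nonneg ‖w‖]
  | succ n ih =>
    by_cases hgood : ∀ p, |⟪x p, w⟫| ≤ τ
    · exact ⟨[], by simp, by simpa using hgood⟩
    simp only [not_forall, not_le] at hgood
    obtain ⟨p, hp⟩ := hgood
    set s := SignType.sign ⟪x p, w⟫
    have hstep := norm_sub_sign_smul_sq_le hη.le (hx p) hητ hp.le
    obtain ⟨l, hlen, hl⟩ := ih (w - (η * s) • x p) (by push_cast at hn; linarith)
    refine ⟨(p, s) :: l, by push_cast [List.length_cons]; linarith, fun q => ?_⟩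
    simpa [smul_add, smul_smul, sub_add_eq_sub_sub] using hl q

theorem exists_signedSum_abs_inner_sub_le_of_le_two_mul (x : ι → E) {b η τ : ℝ} (hη : 0 < η)
    (hτ : 0 < τ) (hητ : η * b ^ 2 ≤ τ) (hτη : τ ≤ 2 * (η * b ^ 2)) (hx : ∀ p, ‖x p‖ ≤ b)
    (w : E) :
    ∃ l : List (ι × SignType), (l.length : ℝ) ≤ 2 * b ^ 2 * ‖w‖ ^ 2 / τ ^ 2 ∧
      ∀ p, |⟪x p, w - η • signedSum x l⟫| ≤ τ := by
  obtain ⟨l, hlen, hl⟩ := exists_signedSum_abs_inner_sub_le x hη hτ hητ hx w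
  refine ⟨l, (le_div_iff₀ (by positivity)).mpr ?_, hl⟩
  calc l.length * τ ^ 2 ≤ l.length * (2 * (η * b ^ 2) * τ) := by
        gcongr; rw [sq]; exact mul_le_mul_of_nonneg_right hτη hτ.le
    _ = 2 * b ^ 2 * (l.length * (η * τ)) := by ring
    _ ≤ 2 * b ^ 2 * ‖w‖ ^ 2 := by gcongr

lemma mul_le_mul_sqrt_div_of_mul_sq_le {a b ε t : ℝ} (ha : 0 < a) (hε : 0 < ε) (ht : 0 ≤ t)
    (h : a * b ^ 2 * t ≤ ε ^ 2) : b * t ≤ ε * √(t / a) := by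
  rw [← Real.sqrt_sq hε.le, ← Real.sqrt_mul (sq_nonneg ε)]
  apply Real.le_sqrt_of_sq_le
  rw [mul_pow, mul_div_assoc', le_div_iff₀ ha]
  nlinarith [mul_le_mul_of_nonneg_right h ht]

theorem exists_quantized_signedSum_approx (x : ι → E) {a b ε : ℝ} (ha : 0 < a) (hb : 0 < b)
    (hε : 0 < ε) (hx : ∀ p, ‖x p‖ ≤ b) {w : E} (hw : ‖w‖ ≤ a) :
    ∃ (j : Fin (⌈2 * (a * b / ε)⌉₊ + 1)) (l : List (ι × SignType)),
      (l.length : ℝ) ≤ 2 * a * b ^ 2 * ‖w‖ / ε ^ 2 ∧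
      ∀ p, |⟪x p, w - ((j : ℝ) * (ε ^ 2 / (2 * a * b ^ 3))) • signedSum x l⟫| ≤
        ε * √(‖w‖ / a) := by
  set t := ‖w‖
  by_cases hsmall : a * b ^ 2 * t ≤ ε ^ 2
  · refine ⟨0, [], by simp; positivity, fun p => ?_⟩
    calc |⟪x p, w - _⟫| = |⟪x p, w⟫| := by simp
      _ ≤ ‖x p‖ * t := abs_real_inner_le_norm _ _
      _ ≤ b * t := by gcongr; exact hx p
      _ ≤ ε * √(t / a) := mul_le_mul_sqrt_div_of_mul_sq_le ha hε (norm_nonneg w) hsmall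
  push Not at hsmall
  have ht0 : 0 < t :=
    pos_of_mul_pos_right ((sq_pos_of_pos hε).trans hsmall) (by positivity)
  set s := √(t / a)
  have hs0 : 0 < s := Real.sqrt_pos.mpr (div_pos ht0 ha)
  have hs2 : s ^ 2 = t / a := Real.sq_sqrt (div_pos ht0 ha).le
  have hs1 : s ≤ 1 := Real.sqrt_le_one.mpr ((div_le_one ha).mpr hw)
  set ρ := 2 * (a * b / ε) * s
  have hρ2 : 2 < ρ := by
    have hρsq : ρ ^ 2 = 4 * (a * b ^ 2 * t / ε ^ 2) := by
      simp only [ρ, mul_pow, div_pow, hs2]; field_simp; ring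
    have : 1 < a * b ^ 2 * t / ε ^ 2 := (one_lt_div (by positivity)).mpr hsmall
    nlinarith [(by positivity : 0 ≤ ρ)]
  set j := ⌊ρ⌋₊
  have hjρ : (j : ℝ) ≤ ρ := Nat.floor_le (by positivity)
  have hρj : ρ < j + 1 := Nat.lt_floor_add_one ρ
  have hρJ : ρ ≤ 2 * (a * b / ε) := mul_le_of_le_one_right (by positivity) hs1
  have hjJ : j < ⌈2 * (a * b / ε)⌉₊ + 1 :=
    Nat.lt_succ_of_le ((Nat.floor_mono hρJ).trans (Nat.floor_le_ceil _))
  -- `ρ / 2 < j ≤ ρ`, so the quantized step `η` satisfies `τ / 2 ≤ η b² ≤ τ`.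
  set η := (j : ℝ) * (ε ^ 2 / (2 * a * b ^ 3))
  set τ := ε * s
  have hηb : η * b ^ 2 = j / ρ * τ := by
    simp only [η, τ, ρ]; field_simp
  have hηpos : 0 < η := by
    have : (1 : ℝ) < j := by linarith
    positivity
  have hητ : η * b ^ 2 ≤ τ := by
    rw [hηb]; exact mul_le_of_le_one_left (by positivity) ((div_le_one (by linarith)).mpr hjρ)
  have hτη : τ ≤ 2 * (η * b ^ 2) := by
    rw [hηb, ← mul_assoc, mul_div_assoc']
    exact le_mul_of_one_le_left (by positivity) ((one_le_div (by positivity)).mpr (by linarith))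
  obtain ⟨l, hlen, hl⟩ :=
    exists_signedSum_abs_inner_sub_le_of_le_two_mul x hηpos (by positivity) hητ hτη hx w
  refine ⟨⟨j, hjJ⟩, l, hlen.trans_eq ?_, hl⟩
  change 2 * b ^ 2 * t ^ 2 / (ε * s) ^ 2 = _
  rw [mul_pow, hs2]
  field_simp

noncomputable def sparseAtom {κ : Type*} [DecidableEq κ] {n : ℕ} (x : ι → E) (η : ℝ)
    (e : ι × κ × Fin n × SignType) : κ → E :=
  Pi.single e.2.1 (((e.2.2.1 : ℝ) * η) • (e.2.2.2 : ℝ) • x e.1)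

lemma sum_map_sparseAtom {κ : Type*} [DecidableEq κ] {n : ℕ} (x : ι → E) (η : ℝ) (c : κ)
    (j : Fin n) (l : List (ι × SignType)) :
    ((l.map fun e => (e.1, c, j, e.2)).map (sparseAtom x η)).sum =
      Pi.single c (((j : ℝ) * η) • signedSum x l) := by
  induction l with
  | nil => simp
  | cons e l ih => simp_all [sparseAtom, Pi.single_add, smul_add]

lemma Multiset.sum_map_finset_sum {α β M : Type*} [AddCommMonoid M] (f : β → M)
    (S : α → Multiset β) (s : Finset α) :
    ((∑ i ∈ s, S i).map f).sum = ∑ i ∈ s, ((S i).map f).sum :=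
  map_sum (Multiset.sumAddMonoidHom.comp (Multiset.mapAddMonoidHom f)) S s

theorem exists_sparseAtom_sum_approx {κ : Type*} [Fintype κ] [DecidableEq κ] (x : ι → E)
    {a b ε : ℝ} (ha : 0 < a) (hb : 0 < b) (hε : 0 < ε) (hx : ∀ p, ‖x p‖ ≤ b) {w : κ → E}
    (hw : ∑ c, ‖w c‖ ≤ a) :
    ∃ S : Multiset (ι × κ × Fin (⌈2 * (a * b / ε)⌉₊ + 1) × SignType),
      (Multiset.card S : ℝ) ≤ 2 * (a * b / ε) ^ 2 ∧
      ∀ p, ∑ c, ⟪x p, w c - (S.map (sparseAtom x (ε ^ 2 / (2 * a * b ^ 3)))).sum c⟫ ^ 2 ≤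
        ε ^ 2 := by
  have hwc (c : κ) : ‖w c‖ ≤ a :=
    (Finset.single_le_sum (fun c _ => norm_nonneg (w c)) (Finset.mem_univ c)).trans hw
  choose j l hlen hl using fun c => exists_quantized_signedSum_approx x ha hb hε hx (hwc c)
  set S := ∑ c, ((l c : Multiset (ι × SignType)).map fun e => (e.1, c, j c, e.2))
  refine ⟨S, ?_, fun p => ?_⟩
  · calc (Multiset.card S : ℝ) = ∑ c, ((l c).length : ℝ) := by simp [S]
      _ ≤ ∑ c, 2 * a * b ^ 2 * ‖w c‖ / ε ^ 2 := Finset.sum_le_sum fun c _ => hlen c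
      _ = 2 * a * b ^ 2 / ε ^ 2 * ∑ c, ‖w c‖ := by
          rw [Finset.mul_sum]; exact Finset.sum_congr rfl fun c _ => by ring
      _ ≤ 2 * a * b ^ 2 / ε ^ 2 * a := by gcongr
      _ = 2 * (a * b / ε) ^ 2 := by ring
  · have hV : (S.map (sparseAtom x (ε ^ 2 / (2 * a * b ^ 3)))).sum =
        fun c => ((j c : ℝ) * (ε ^ 2 / (2 * a * b ^ 3))) • signedSum x (l c) := by
      rw [Multiset.sum_map_finset_sum]
      simp only [Multiset.map_coe, Multiset.sum_coe, sum_map_sparseAtom]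
      exact Finset.univ_sum_single _
    rw [hV]
    calc ∑ c, ⟪x p, w c - ((j c : ℝ) * (ε ^ 2 / (2 * a * b ^ 3))) • signedSum x (l c)⟫ ^ 2
        ≤ ∑ c, (ε * √(‖w c‖ / a)) ^ 2 := Finset.sum_le_sum fun c _ =>
          (sq_abs _).symm.trans_le (pow_le_pow_left₀ (abs_nonneg _) (hl c p) 2)
      _ = ε ^ 2 / a * ∑ c, ‖w c‖ := by
          rw [Finset.mul_sum]
          refine Finset.sum_congr rfl fun c _ => ?_
          rw [mul_pow, Real.sq_sqrt (div_nonneg (norm_nonneg _) ha.le)]; ring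
      _ ≤ ε ^ 2 / a * a := by gcongr
      _ = ε ^ 2 := by field_simp

lemma List.sum_fin_getElem?_elim {α M : Type*} [AddCommMonoid M] (φ : α → M) :
    ∀ (l : List α) {K : ℕ}, l.length ≤ K → ∑ s : Fin K, (l[(s : ℕ)]?).elim 0 φ = (l.map φ).sum
  | [], K, _ => by simp
  | e :: l, K + 1, h => by
    rw [Fin.sum_univ_succ]
    simp [l.sum_fin_getElem?_elim φ (Nat.le_of_succ_le_succ h)]

lemma Multiset.exists_sum_elim_eq_sum_map {α M : Type*} [AddCommMonoid M] (φ : α → M)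
    {K : ℕ} (S : Multiset α) (hS : card S ≤ K) :
    ∃ f : Fin K → Option α, ∑ s, (f s).elim 0 φ = (S.map φ).sum := by
  refine ⟨fun s => S.toList[(s : ℕ)]?, ?_⟩
  rw [S.toList.sum_fin_getElem?_elim φ (by simpa using hS)]
  conv_rhs => rw [← S.coe_toList]
  simp

theorem exists_finset_inner_cover {κ : Type*} [Fintype ι] [Fintype κ] [DecidableEq κ]
    (x : ι → E) {a b ε : ℝ} (ha : 0 < a) (hb : 0 < b) (hε : 0 < ε) (hx : ∀ p, ‖x p‖ ≤ b) :
    ∃ C : Finset (ι → κ → ℝ),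
      C.card ≤ (Fintype.card ι * Fintype.card κ * (3 * (⌈2 * (a * b / ε)⌉₊ + 1)) + 1) ^
        ⌊2 * (a * b / ε) ^ 2⌋₊ ∧
      ∀ w : κ → E, ∑ c, ‖w c‖ ≤ a → ∃ Y ∈ C, ∀ p, ∑ c, (⟪x p, w c⟫ - Y p c) ^ 2 ≤ ε ^ 2 := by
  classical
  refine ⟨Finset.univ.image fun f : Fin ⌊2 * (a * b / ε) ^ 2⌋₊ →
      Option (ι × κ × Fin (⌈2 * (a * b / ε)⌉₊ + 1) × SignType) =>
    fun p c => ⟪x p, (∑ s, (f s).elim 0 (sparseAtom x (ε ^ 2 / (2 * a * b ^ 3)))) c⟫, ?_, ?_⟩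
  · refine Finset.card_image_le.trans (le_of_eq ?_)
    have hsign : Fintype.card SignType = 3 := rfl
    simp only [Finset.card_univ, Fintype.card_fun, Fintype.card_option, Fintype.card_prod,
      Fintype.card_fin, hsign]
    ring
  · intro w hw
    obtain ⟨S, hcard, hS⟩ := exists_sparseAtom_sum_approx x ha hb hε hx hw
    obtain ⟨f, hf⟩ := S.exists_sum_elim_eq_sum_map (sparseAtom x (ε ^ 2 / (2 * a * b ^ 3)))
      (Nat.le_floor hcard)
    refine ⟨_, Finset.mem_image_of_mem _ (Finset.mem_univ f), fun p => ?_⟩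
    simpa only [hf, inner_sub_right] using hS p

end

lemma Real.logb_le_mul_logb_of_le_pow {c : ℝ} (hc : 1 < c) {n B K : ℕ} (h : n ≤ B ^ K) :
    logb c n ≤ K * logb c B := by
  have hB : 0 ≤ logb c B := by
    rcases B.eq_zero_or_pos with rfl | hB
    · simp
    · exact Real.logb_nonneg hc (by exact_mod_cast hB)
  rcases n.eq_zero_or_pos with rfl | hn
  · simp; positivity
  rw [← Real.logb_pow]
  exact Real.logb_le_logb_of_le hc (by exact_mod_cast hn) (by exact_mod_cast h)

lemma floor_mul_logb_le {r : ℝ} (hr : 0 ≤ r) (n : ℕ) :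
    ⌊2 * r ^ 2⌋₊ * Real.logb 2 (n * (3 * (⌈2 * r⌉₊ + 1)) + 1 : ℕ) ≤
      64 * r ^ 2 * Real.logb 2 ((8 * r + 7) * n) := by
  rcases n.eq_zero_or_pos with rfl | hn
  · simp
  have hK : (⌊2 * r ^ 2⌋₊ : ℝ) ≤ 64 * r ^ 2 :=
    (Nat.floor_le (by positivity)).trans (by nlinarith)
  have hn1 : (1 : ℝ) ≤ n := by exact_mod_cast hn
  have hB : ((n * (3 * (⌈2 * r⌉₊ + 1)) + 1 : ℕ) : ℝ) ≤ (8 * r + 7) * n := by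
    have := Nat.ceil_lt_add_one (by positivity : 0 ≤ 2 * r)
    push_cast
    nlinarith
  have hBpos : (0 : ℝ) < (n * (3 * (⌈2 * r⌉₊ + 1)) + 1 : ℕ) := by positivity
  calc _ ≤ 64 * r ^ 2 * Real.logb 2 (n * (3 * (⌈2 * r⌉₊ + 1)) + 1 : ℕ) :=
        mul_le_mul_of_nonneg_right hK
          (Real.logb_nonneg one_lt_two (by exact_mod_cast Nat.succ_pos _))
    _ ≤ _ := mul_le_mul_of_nonneg_left (Real.logb_le_logb_of_le one_lt_two hBpos hB)
        (by positivity)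

lemma eNorm_eq_norm {q : ℕ} (v : Fin q → ℝ) : eNorm v = ‖WithLp.toLp 2 v‖ := by
  simp [eNorm, EuclideanSpace.norm_eq]

theorem stmt_13_general (N U d m : ℕ)
    (a b ε : ℝ) (ha : 0 < a) (hb : 0 < b) (hε : 0 < ε)
    (X : Fin N → Fin U → Fin d → ℝ) (hX : ∀ i u', eNorm (X i u') ≤ b)
    (M : Matrix (Fin d) (Fin m) ℝ) :
    ∃ C : Finset (Fin N → Fin U → Fin m → ℝ),
      (∀ A : Matrix (Fin d) (Fin m) ℝ,
        (∑ c : Fin m, eNorm (fun i => A i c - M i c)) ≤ a →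
        ∃ Y ∈ C, ∀ i u', eNorm (fun c => (∑ t, X i u' t * A t c) - Y i u' c) ≤ ε) ∧
      Real.logb 2 C.card ≤
        (64 * a ^ 2 * b ^ 2 / ε ^ 2) *
          Real.logb 2 ((8 * a * b / ε + 7) * (m * N * U)) := by
  classical
  obtain ⟨C, hcard, hcover⟩ := exists_finset_inner_cover (κ := Fin m)
    (fun p : Fin N × Fin U => WithLp.toLp 2 (X p.1 p.2)) ha hb hε
    (fun p => by simpa [eNorm_eq_norm] using hX p.1 p.2)
  refine ⟨C.image fun Y i u c => (∑ t, X i u t * M t c) + Y (i, u) c, fun A hA => ?_, ?_⟩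
  · obtain ⟨Y, hYC, hY⟩ := hcover (fun c => WithLp.toLp 2 fun t => A t c - M t c)
      (by simpa [eNorm_eq_norm] using hA)
    refine ⟨_, Finset.mem_image_of_mem _ hYC, fun i u => ?_⟩
    rw [eNorm, Real.sqrt_le_left hε.le]
    convert hY (i, u) using 3 with c
    simp only [EuclideanSpace.inner_toLp_toLp, dotProduct, star_trivial, sub_mul,
      Finset.sum_sub_distrib, mul_comm (X i u _), sub_add_eq_sub_sub]
  · calc Real.logb 2 (C.image _).card
        ≤ ⌊2 * (a * b / ε) ^ 2⌋₊ *
            Real.logb 2 (N * U * m * (3 * (⌈2 * (a * b / ε)⌉₊ + 1)) + 1 : ℕ) :=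
          Real.logb_le_mul_logb_of_le_pow one_lt_two
            (by simpa using Finset.card_image_le.trans hcard)
      _ ≤ 64 * (a * b / ε) ^ 2 * Real.logb 2 ((8 * (a * b / ε) + 7) * (N * U * m : ℕ)) :=
          floor_mul_logb_le (by positivity) _
      _ = _ := by push_cast; ring_nf

/-- `L∞` covering number of linear classes with `(2,1)`-norm
constraints.  Let `X ∈ ℝ^{N×U×d}` with `‖X_{i,u,·}‖₂ ≤ b` and fix `M ∈ ℝ^{d×m}`.
Then the class `{XA : ‖A − M‖_{2,1} ≤ a}` (where `(XA)_{i,u,·} = Aᵀ X_{i,u,·}` and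
`‖A‖_{2,1}` is the sum over columns of `A` of their Euclidean norms) admits, for every
`ε > 0`, an `ε`-cover in the norm `‖Y‖_* = max_{i,u} ‖Y_{i,u,·}‖₂` whose cardinality
`𝒩` satisfies `log₂ 𝒩 ≤ (64a²b²/ε²) · log₂((8ab/ε + 7)·mNU)`. -/
theorem stmt_13 (N U d m : ℕ) (hN : 0 < N) (hU : 0 < U) (hd : 0 < d) (hm : 0 < m)
    (a b ε : ℝ) (ha : 0 < a) (hb : 0 < b) (hε : 0 < ε)
    (X : Fin N → Fin U → Fin d → ℝ) (hX : ∀ i u', eNorm (X i u') ≤ b)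
    (M : Matrix (Fin d) (Fin m) ℝ) :
    ∃ C : Finset (Fin N → Fin U → Fin m → ℝ),
      (∀ A : Matrix (Fin d) (Fin m) ℝ,
        (∑ c : Fin m, eNorm (fun i => A i c - M i c)) ≤ a →
        ∃ Y ∈ C, ∀ i u', eNorm (fun c => (∑ t, X i u' t * A t c) - Y i u' c) ≤ ε) ∧
      Real.logb 2 C.card ≤
        (64 * a ^ 2 * b ^ 2 / ε ^ 2) *
          Real.logb 2 ((8 * a * b / ε + 7) * (m * N * U)) :=
  stmt_13_general N U d m a b ε ha hb hε X hX M
end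

section
/- (Excess-risk decomposition into KL divergences.) Assume mn > N, N p_{i,j} ≤ 1 for all (i,j), and let G ∈ (0,1)^{m×n×(k+1)} satisfy Σ_{κ=0}^k G_{i,j,κ} = 1 for every (i,j). Write G_{i,j} = Σ_{κ=1}^k G_{i,j,κ}, 𝒢 = Σ_{i,j} G_{i,j}, and assume 0 < 𝒢 < mn. With L' and G^Bayes as defined, the excess risk decomposes as L'(G) − L'(G^Bayes) = T₁ + T₂ + T₃, where T₁ = Σ_{i,j} Σ_{κ=1}^k p_{i,j,κ} log( p_{i,j,κ} 𝒢 / G_{i,j,κ} ), T₂ = ((mn−N)/N) · Σ_{i,j} [ (1 − N p_{i,j})/(mn−N) ] · log( [ (1 − N p_{i,j})/(mn−N) ] / [ (1 − G_{i,j})/(mn−𝒢) ] ), and T₃ = (1/N) · log( (mn−N)^{mn−N} N^N / ( (mn−𝒢)^{mn−N} 𝒢^N ) ), with the convention 0·log 0 = 0. Moreover T₁ ≥ 0, T₂ ≥ 0, and T₃ ≥ 0. -/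
open scoped BigOperators


lemma aux_mul_log_div (x y : ℝ) (hx : 0 ≤ x) (hy : 0 < y) :
    x * Real.log (x / y) = x * (Real.log x - Real.log y) := by
  rcases hx.eq_or_lt with h|h
  · simp [← h]
  · rw [Real.log_div h.ne' hy.ne']

lemma aux_gibbs (x y : ℝ) (hx : 0 ≤ x) (hy : 0 < y) :
    x - y ≤ x * Real.log (x / y) := by
  rcases hx.eq_or_lt with h|h
  · simp [← h]; linarith
  · have h1 : 0 < y / x := by positivity
    have h2 := Real.log_le_sub_one_of_pos h1
    have hlog : Real.log (x / y) = - Real.log (y / x) := by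
      rw [Real.log_div h.ne' hy.ne', Real.log_div hy.ne' h.ne']; ring
    have hxy : x * (y / x) = y := by field_simp
    rw [hlog]
    nlinarith [mul_le_mul_of_nonneg_left h2 h.le]

lemma aux_gibbs' (x y : ℝ) (hx : 0 ≤ x) (hy : 0 < y) :
    x - y ≤ x * (Real.log x - Real.log y) := by
  have := aux_gibbs x y hx hy
  rwa [aux_mul_log_div x y hx hy] at this

lemma aux_t2term (a c g d : ℝ) (ha : 0 ≤ a) (hc : 0 < c) (hg : 0 < g) (hd : 0 < d) :
    (a/c) * Real.log ((a/c)/(g/d)) =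
      (1/c) * (a * (Real.log a - Real.log g)) + (a/c) * (Real.log d - Real.log c) := by
  rcases ha.eq_or_lt with h|h
  · simp [← h]
  · rw [Real.log_div (by positivity) (by positivity), Real.log_div h.ne' hc.ne',
      Real.log_div hg.ne' hd.ne']
    ring

lemma aux_t1term (p g 𝒢 : ℝ) (hp : 0 ≤ p) (hg : 0 < g) (h𝒢 : 0 < 𝒢) :
    p * Real.log (p * 𝒢 / g) = p * (Real.log p - Real.log g) + p * Real.log 𝒢 := by
  rcases hp.eq_or_lt with h|h
  · simp [← h]
  · rw [Real.log_div (by positivity) hg.ne', Real.log_mul h.ne' h𝒢.ne']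
    ring

lemma aux_logN (c p : ℝ) (hc : 0 < c) (hp : 0 ≤ p) :
    p * Real.log (c * p) = p * Real.log p + p * Real.log c := by
  rcases hp.eq_or_lt with h|h
  · simp [← h]
  · rw [Real.log_mul hc.ne' h.ne']
    ring

/-- excess-risk decomposition into KL divergences.  Let `p` be the
sampling distribution on `[m]×[n]×[k]`, `p_{i,j} = ∑_κ p_{i,j,κ}`, and assume
`mn > N` and `N p_{i,j} ≤ 1`.  Let `G ∈ (0,1)^{m×n×(k+1)}` have rows summing to one,
`G_{i,j} = ∑_{κ=1}^k G_{i,j,κ}`, `𝒢 = ∑_{i,j} G_{i,j}`, `0 < 𝒢 < mn`.  With the loss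
`L'(G') = −∑_{i,j}∑_{κ=1}^k p_{i,j,κ} log G'_{i,j,κ} − ∑_{i,j}(1/N − 1 + p_{i,j,0}) log G'_{i,j,0}`
and `G^Bayes_{i,j,κ} = N p_{i,j,κ}`, `G^Bayes_{i,j,0} = 1 − N p_{i,j}` (convention
`0·log 0 = 0`, implemented by `Real.log 0 = 0` since every undefined logarithm is
multiplied by a vanishing coefficient), we have
`L'(G) − L'(G^Bayes) = T₁ + T₂ + T₃` with `T₁, T₂, T₃ ≥ 0`, where `T₁`, `T₂`, `T₃`
are the two Kullback–Leibler divergence terms and the normalization term. -/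
theorem stmt_16 (m n k N : ℕ) (hm : 1 ≤ m) (hn : 1 ≤ n) (hk : 1 ≤ k) (hN : 1 ≤ N)
    (hmnN : N < m * n)
    (p : Fin m → Fin n → Fin k → ℝ) (hp : ∀ i j κ, 0 ≤ p i j κ)
    (hpsum : ∑ i, ∑ j, ∑ κ, p i j κ = 1)
    (hNp : ∀ i j, (N : ℝ) * ∑ κ, p i j κ ≤ 1)
    (G : Fin m → Fin n → Fin (k + 1) → ℝ)
    (hG0 : ∀ i j κ, 0 < G i j κ) (hG1 : ∀ i j κ, G i j κ < 1)
    (hGsum : ∀ i j, ∑ κ, G i j κ = 1)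
    (GB : Fin m → Fin n → Fin (k + 1) → ℝ)
    (hGB : ∀ i j (κ : Fin k), GB i j κ.succ = N * p i j κ)
    (hGB0 : ∀ i j, GB i j 0 = 1 - N * ∑ κ, p i j κ)
    (Lp : (Fin m → Fin n → Fin (k + 1) → ℝ) → ℝ)
    (hLp : ∀ G', Lp G' =
      -(∑ i, ∑ j, ∑ κ : Fin k, p i j κ * Real.log (G' i j κ.succ)) -
        ∑ i, ∑ j, (1 / (N : ℝ) - 1 + (1 - ∑ κ, p i j κ)) * Real.log (G' i j 0))
    (𝒢 : ℝ) (h𝒢 : 𝒢 = ∑ i, ∑ j, ∑ κ : Fin k, G i j κ.succ)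
    (h𝒢0 : 0 < 𝒢) (h𝒢mn : 𝒢 < m * n)
    (T₁ T₂ T₃ : ℝ)
    (hT₁ : T₁ = ∑ i, ∑ j, ∑ κ : Fin k,
      p i j κ * Real.log (p i j κ * 𝒢 / G i j κ.succ))
    (hT₂ : T₂ = ((m * n - N : ℝ) / N) * ∑ i, ∑ j,
      ((1 - N * ∑ κ, p i j κ) / (m * n - N : ℝ)) *
        Real.log (((1 - N * ∑ κ, p i j κ) / (m * n - N : ℝ)) /
          ((1 - ∑ κ : Fin k, G i j κ.succ) / (m * n - 𝒢))))
    (hT₃ : T₃ = (1 / (N : ℝ)) *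
      Real.log (((m * n - N : ℝ) ^ (m * n - N) * (N : ℝ) ^ N) /
        (((m * n : ℝ) - 𝒢) ^ (m * n - N) * 𝒢 ^ N))) :
    Lp G - Lp GB = T₁ + T₂ + T₃ ∧ 0 ≤ T₁ ∧ 0 ≤ T₂ ∧ 0 ≤ T₃ := by
  have hN0 : (0:ℝ) < N := by exact_mod_cast hN
  have hmn' : (N:ℝ) < (m:ℝ) * n := by exact_mod_cast hmnN
  have hc : (0:ℝ) < (m:ℝ) * n - N := by linarith
  have hd : (0:ℝ) < (m:ℝ) * n - 𝒢 := by linarith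
  have hkne : Nonempty (Fin k) := ⟨⟨0, hk⟩⟩
  have hS : ∀ i j, G i j 0 + ∑ κ : Fin k, G i j κ.succ = 1 := fun i j => by
    rw [← Fin.sum_univ_succ]; exact hGsum i j
  have hg : ∀ i j, 0 < 1 - ∑ κ : Fin k, G i j κ.succ := fun i j => by
    have := hS i j; have := hG0 i j 0; linarith
  have ha : ∀ i j, (0:ℝ) ≤ 1 - N * ∑ κ, p i j κ := fun i j => by
    have := hNp i j; linarith
  have hG0eq : ∀ i j, G i j 0 = 1 - ∑ κ : Fin k, G i j κ.succ := fun i j => by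
    have := hS i j; linarith
  -- sum facts
  have hones : (∑ _i : Fin m, ∑ _j : Fin n, (1:ℝ)) = (m:ℝ) * n := by
    simp [Finset.sum_const, Finset.card_univ]
  have hasum : ∑ i, ∑ j, (1 - (N:ℝ) * ∑ κ, p i j κ) = (m:ℝ) * n - N := by
    simp_rw [Finset.sum_sub_distrib, ← Finset.mul_sum]
    rw [hpsum, hones]; ring
  have hgsum' : ∑ i, ∑ j, (1 - ∑ κ : Fin k, G i j κ.succ) = (m:ℝ) * n - 𝒢 := by
    simp_rw [Finset.sum_sub_distrib]
    rw [← h𝒢, hones]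
  -- abbreviated sums
  set S1 : ℝ := ∑ i, ∑ j, ∑ κ : Fin k,
      p i j κ * (Real.log (p i j κ) - Real.log (G i j κ.succ)) with hS1def
  set S2 : ℝ := ∑ i, ∑ j, (1 - (N:ℝ) * ∑ κ, p i j κ) *
      (Real.log (1 - (N:ℝ) * ∑ κ, p i j κ) -
        Real.log (1 - ∑ κ : Fin k, G i j κ.succ)) with hS2def
  have E1 : T₁ = S1 + Real.log 𝒢 := by
    rw [hT₁, hS1def]
    have ht : ∀ i j (κ : Fin k), p i j κ * Real.log (p i j κ * 𝒢 / G i j κ.succ) =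
        p i j κ * (Real.log (p i j κ) - Real.log (G i j κ.succ)) +
          p i j κ * Real.log 𝒢 := fun i j κ =>
      aux_t1term _ _ _ (hp i j κ) (hG0 i j κ.succ) h𝒢0
    simp_rw [ht, Finset.sum_add_distrib, ← Finset.sum_mul]
    rw [hpsum, one_mul]
  have E2 : T₂ = (1/(N:ℝ)) * S2 +
      (((m:ℝ)*n - N)/N) * (Real.log ((m:ℝ)*n - 𝒢) - Real.log ((m:ℝ)*n - N)) := by
    rw [hT₂, hS2def]
    have ht : ∀ i j,
        ((1 - (N:ℝ) * ∑ κ, p i j κ) / ((m:ℝ) * n - N)) *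
          Real.log (((1 - (N:ℝ) * ∑ κ, p i j κ) / ((m:ℝ) * n - N)) /
            ((1 - ∑ κ : Fin k, G i j κ.succ) / ((m:ℝ) * n - 𝒢))) =
        (1/((m:ℝ)*n - N)) * ((1 - (N:ℝ) * ∑ κ, p i j κ) *
            (Real.log (1 - (N:ℝ) * ∑ κ, p i j κ) -
              Real.log (1 - ∑ κ : Fin k, G i j κ.succ))) +
          ((1 - (N:ℝ) * ∑ κ, p i j κ) / ((m:ℝ)*n - N)) *
            (Real.log ((m:ℝ)*n - 𝒢) - Real.log ((m:ℝ)*n - N)) := fun i j =>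
      aux_t2term _ _ _ _ (ha i j) hc (hg i j) hd
    simp_rw [ht, Finset.sum_add_distrib, ← Finset.mul_sum, div_mul_eq_mul_div,
      ← Finset.sum_div, ← Finset.sum_mul]
    rw [hasum]
    field_simp
  have E3 : T₃ = (((m:ℝ)*n - N)/N) * (Real.log ((m:ℝ)*n - N) - Real.log ((m:ℝ)*n - 𝒢)) +
      Real.log N - Real.log 𝒢 := by
    rw [hT₃]
    have hcast : ((m*n - N : ℕ) : ℝ) = (m:ℝ)*n - N := by
      rw [Nat.cast_sub hmnN.le]; push_cast; ring
    rw [Real.log_div (by positivity) (by positivity),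
      Real.log_mul (pow_ne_zero _ hc.ne') (pow_ne_zero _ hN0.ne'),
      Real.log_mul (pow_ne_zero _ hd.ne') (pow_ne_zero _ h𝒢0.ne'),
      Real.log_pow, Real.log_pow, Real.log_pow, Real.log_pow, hcast]
    field_simp
    ring
  have hNplog : ∑ i, ∑ j, ∑ κ : Fin k, p i j κ * Real.log ((N:ℝ) * p i j κ) =
      (∑ i, ∑ j, ∑ κ : Fin k, p i j κ * Real.log (p i j κ)) + Real.log N := by
    have ht : ∀ i j (κ : Fin k), p i j κ * Real.log ((N:ℝ) * p i j κ) =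
        p i j κ * Real.log (p i j κ) + p i j κ * Real.log N := fun i j κ =>
      aux_logN _ _ hN0 (hp i j κ)
    simp_rw [ht, Finset.sum_add_distrib, ← Finset.sum_mul]
    rw [hpsum, one_mul]
  have hcoef : ∀ x : ℝ, (1/(N:ℝ) - 1 + (1 - x)) = (1/(N:ℝ)) * (1 - (N:ℝ)*x) := by
    intro x; field_simp; ring
  have hw : ∀ (x y : ℝ), (1/(N:ℝ) - 1 + (1 - x)) * y = (1/(N:ℝ)) * ((1 - (N:ℝ)*x) * y) := by
    intro x y; rw [hcoef x, mul_assoc]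
  have E4 : Lp G - Lp GB = S1 + Real.log N + (1/(N:ℝ)) * S2 := by
    rw [hLp G, hLp GB]
    simp only [hGB, hGB0, hG0eq]
    simp_rw [hw, ← Finset.mul_sum]
    rw [hNplog]
    have hS1' : S1 = (∑ i, ∑ j, ∑ κ : Fin k, p i j κ * Real.log (p i j κ)) -
        ∑ i, ∑ j, ∑ κ : Fin k, p i j κ * Real.log (G i j κ.succ) := by
      rw [hS1def]; simp_rw [mul_sub, Finset.sum_sub_distrib]
    have hS2' : S2 = (∑ i, ∑ j, (1 - (N:ℝ) * ∑ κ, p i j κ) *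
          Real.log (1 - (N:ℝ) * ∑ κ, p i j κ)) -
        ∑ i, ∑ j, (1 - (N:ℝ) * ∑ κ, p i j κ) *
          Real.log (1 - ∑ κ : Fin k, G i j κ.succ) := by
      rw [hS2def]; simp_rw [mul_sub, Finset.sum_sub_distrib]
    rw [hS1', hS2']
    ring
  refine ⟨by rw [E4, E1, E2, E3]; ring, ?_, ?_, ?_⟩
  · -- T₁ ≥ 0
    rw [hT₁]
    have key : ∀ i j (κ : Fin k), p i j κ - G i j κ.succ / 𝒢 ≤
        p i j κ * Real.log (p i j κ * 𝒢 / G i j κ.succ) := by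
      intro i j κ
      have := aux_gibbs (p i j κ) (G i j κ.succ / 𝒢) (hp i j κ)
        (div_pos (hG0 i j κ.succ) h𝒢0)
      rwa [div_div_eq_mul_div] at this
    have hsum0 : ∑ i, ∑ j, ∑ κ : Fin k, (p i j κ - G i j κ.succ / 𝒢) = 0 := by
      simp_rw [Finset.sum_sub_distrib, ← Finset.sum_div]
      rw [hpsum, ← h𝒢, div_self h𝒢0.ne']
      ring
    calc (0:ℝ) = ∑ i, ∑ j, ∑ κ : Fin k, (p i j κ - G i j κ.succ / 𝒢) := hsum0.symm
      _ ≤ _ := Finset.sum_le_sum fun i _ => Finset.sum_le_sum fun j _ =>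
          Finset.sum_le_sum fun κ _ => key i j κ
  · -- T₂ ≥ 0
    rw [hT₂]
    apply mul_nonneg (div_nonneg hc.le hN0.le)
    have key : ∀ i j,
        (1 - (N:ℝ) * ∑ κ, p i j κ) / ((m:ℝ)*n - N) -
          (1 - ∑ κ : Fin k, G i j κ.succ) / ((m:ℝ)*n - 𝒢) ≤
        ((1 - (N:ℝ) * ∑ κ, p i j κ) / ((m:ℝ)*n - N)) *
          Real.log (((1 - (N:ℝ) * ∑ κ, p i j κ) / ((m:ℝ)*n - N)) /
            ((1 - ∑ κ : Fin k, G i j κ.succ) / ((m:ℝ)*n - 𝒢))) := fun i j =>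
      aux_gibbs _ _ (div_nonneg (ha i j) hc.le) (div_pos (hg i j) hd)
    have hsum0 : ∑ i, ∑ j,
        ((1 - (N:ℝ) * ∑ κ, p i j κ) / ((m:ℝ)*n - N) -
          (1 - ∑ κ : Fin k, G i j κ.succ) / ((m:ℝ)*n - 𝒢)) = 0 := by
      simp_rw [Finset.sum_sub_distrib, ← Finset.sum_div]
      rw [hasum, hgsum', div_self hc.ne', div_self hd.ne']
      ring
    calc (0:ℝ) = _ := hsum0.symm
      _ ≤ _ := Finset.sum_le_sum fun i _ => Finset.sum_le_sum fun j _ => key i j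
  · -- T₃ ≥ 0
    rw [E3]
    have g1 := aux_gibbs' ((m:ℝ)*n - N) ((m:ℝ)*n - 𝒢) hc.le hd
    have g2 := aux_gibbs' (N:ℝ) 𝒢 hN0.le h𝒢0
    have keyineq : 0 ≤ ((m:ℝ)*n - N) * (Real.log ((m:ℝ)*n - N) - Real.log ((m:ℝ)*n - 𝒢)) +
        (N:ℝ) * (Real.log N - Real.log 𝒢) := by linarith
    have heq : (((m:ℝ)*n - N)/N) * (Real.log ((m:ℝ)*n - N) - Real.log ((m:ℝ)*n - 𝒢)) +
        Real.log N - Real.log 𝒢 =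
        (1/(N:ℝ)) * (((m:ℝ)*n - N) * (Real.log ((m:ℝ)*n - N) - Real.log ((m:ℝ)*n - 𝒢)) +
          (N:ℝ) * (Real.log N - Real.log 𝒢)) := by
      field_simp
      ring
    rw [heq]
    exact mul_nonneg (by positivity) keyineq
end
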